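/- arXiv:2602.22097 — 3 statements merged into one kernel-verified Lean document; each statement's English description precedes it below -/
import Mathlib

section
/- Let F ∈ ℝ^d be a nonzero constant vector, S ⊆ ℝ^d a set, and π : ℝ^d → ℝ^d, τ : ℝ^d → ℝ maps such that for every x ∈ ℝ^d, π(x) ∈ S and x = π(x) + τ(x) • F. Let h : ℝ^d → ℝ^d be continuously differentiable with ∇·h = 0 on ℝ^d, and let v : ℝ^d → ℝ^d be twice continuously differentiable with fderiv ℝ v x F = −h(x) for all x. If ∇·v = 0 at every point of S, then ∇·v = 0 on all of ℝ^d. -/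
open scoped BigOperators

/-- Propagation of the divergence-free constraint along characteristics: if
`(F·∇)v = −h` with `∇·h = 0` on `ℝ^d` and `∇·v = 0` on the transverse hypersurface `S`,
then `∇·v = 0` on all of `ℝ^d`. -/
theorem stmt_4 {d : ℕ} (F : Fin d → ℝ) (hF : F ≠ 0) (S : Set (Fin d → ℝ))
    (π : (Fin d → ℝ) → (Fin d → ℝ)) (τ : (Fin d → ℝ) → ℝ)
    (hdecomp : ∀ x : Fin d → ℝ, π x ∈ S ∧ x = π x + τ x • F)
    (h : (Fin d → ℝ) → (Fin d → ℝ)) (hh : ContDiff ℝ 1 h)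
    (hdivh : ∀ x : Fin d → ℝ, ∑ i : Fin d, fderiv ℝ h x (Pi.single i 1) i = 0)
    (v : (Fin d → ℝ) → (Fin d → ℝ)) (hv : ContDiff ℝ 2 v)
    (htransport : ∀ x : Fin d → ℝ, fderiv ℝ v x F = -h x)
    (hdivS : ∀ y ∈ S, ∑ i : Fin d, fderiv ℝ v y (Pi.single i 1) i = 0) :
    ∀ x : Fin d → ℝ, ∑ i : Fin d, fderiv ℝ v x (Pi.single i 1) i = 0 := by
  classical
  have hv1 : ContDiff ℝ 1 (fderiv ℝ v) := hv.fderiv_right (by norm_num)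
  have hvd : Differentiable ℝ v := hv.differentiable (by norm_num)
  have hv'd : Differentiable ℝ (fderiv ℝ v) := hv1.differentiable (by norm_num)
  have hhd : Differentiable ℝ h := hh.differentiable (by norm_num)
  set g : (Fin d → ℝ) → ℝ := fun x => ∑ i, fderiv ℝ v x (Pi.single i 1) i with hg
  let L : ((Fin d → ℝ) →L[ℝ] (Fin d → ℝ)) →L[ℝ] ℝ :=
    ∑ i : Fin d, (ContinuousLinearMap.proj i).comp
      (ContinuousLinearMap.apply ℝ (Fin d → ℝ) (Pi.single i 1))
  have hLapp : ∀ A : (Fin d → ℝ) →L[ℝ] (Fin d → ℝ), L A = ∑ i, A (Pi.single i 1) i := by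
    intro A
    simp [L, ContinuousLinearMap.sum_apply]
  have hgL : ∀ x, g x = L (fderiv ℝ v x) := by
    intro x; rw [hLapp]
  -- second derivative symmetry
  have hsymm : ∀ x w u, fderiv ℝ (fderiv ℝ v) x w u = fderiv ℝ (fderiv ℝ v) x u w := by
    intro x w u
    exact second_derivative_symmetric (fun y => (hvd y).hasFDerivAt)
      ((hv'd x).hasFDerivAt) w u
  -- derivative of g
  have hgderiv : ∀ x, HasFDerivAt g (L.comp (fderiv ℝ (fderiv ℝ v) x)) x := by
    intro x
    have := L.hasFDerivAt.comp x (hv'd x).hasFDerivAt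
    exact this.congr_of_eventuallyEq (Filter.Eventually.of_forall fun y => (hgL y))
  -- directional derivative of the map z ↦ fderiv v z F equals fderiv (-h)
  have hFe : ∀ x (w : Fin d → ℝ), fderiv ℝ (fderiv ℝ v) x w F = -(fderiv ℝ h x w) := by
    intro x w
    have h1 : HasFDerivAt (fun z => fderiv ℝ v z F)
        ((ContinuousLinearMap.apply ℝ (Fin d → ℝ) F).comp (fderiv ℝ (fderiv ℝ v) x)) x :=
      (ContinuousLinearMap.apply ℝ (Fin d → ℝ) F).hasFDerivAt.comp x (hv'd x).hasFDerivAt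
    have h2 : HasFDerivAt (fun z => fderiv ℝ v z F) (-(fderiv ℝ h x)) x := by
      have : HasFDerivAt (fun z => -h z) (-(fderiv ℝ h x)) x := (hhd x).hasFDerivAt.neg
      exact this.congr_of_eventuallyEq (Filter.Eventually.of_forall fun y => (htransport y))
    have := h1.unique h2
    calc fderiv ℝ (fderiv ℝ v) x w F
        = ((ContinuousLinearMap.apply ℝ (Fin d → ℝ) F).comp (fderiv ℝ (fderiv ℝ v) x)) w := rfl
      _ = (-(fderiv ℝ h x)) w := by rw [this]
      _ = -(fderiv ℝ h x w) := rfl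
  have hgF : ∀ x, (L.comp (fderiv ℝ (fderiv ℝ v) x)) F = 0 := by
    intro x
    rw [ContinuousLinearMap.comp_apply, hLapp]
    have : ∀ i : Fin d, fderiv ℝ (fderiv ℝ v) x F (Pi.single i 1) i
        = -(fderiv ℝ h x (Pi.single i 1) i) := by
      intro i
      rw [hsymm x F (Pi.single i 1), hFe x (Pi.single i 1)]
      rfl
    simp only [this, Finset.sum_neg_distrib]
    rw [hdivh x, neg_zero]
  -- g is constant along characteristics
  intro x
  set φ : ℝ → ℝ := fun t => g (π x + t • F) with hφ
  have hφderiv : ∀ t : ℝ, HasDerivAt φ 0 t := by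
    intro t
    have hline : HasDerivAt (fun t : ℝ => π x + t • F) F t := by
      simpa using ((hasDerivAt_id t).smul_const F).const_add (π x)
    have := (hgderiv (π x + t • F)).comp_hasDerivAt t hline
    simp [hgF] at this; exact this
  have hconst : φ (τ x) = φ 0 :=
    is_const_of_deriv_eq_zero (fun t => (hφderiv t).differentiableAt)
      (fun t => (hφderiv t).deriv) _ _
  have hx : x = π x + τ x • F := (hdecomp x).2
  have : g x = g (π x) := by
    have h0 : φ 0 = g (π x) := by simp [φ]
    have h1 : φ (τ x) = g x := by rw [hφ]; simp only []; rw [← hx]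
    rw [← h1, hconst, h0]
  rw [show (∑ i, fderiv ℝ v x (Pi.single i 1) i) = g x from rfl, this]
  exact hdivS _ (hdecomp x).1
end

section
/- Let d ≥ 2, L_1, …, L_d > 0 and F ∈ ℝ^d, and suppose there exists k* ∈ ℤ^d \ {0} with ∑_{i=1}^{d} F_i k*_i / L_i = 0. Choose a ∈ ℝ^d with a ≠ 0 and ∑_{i=1}^{d} a_i k*_i / L_i = 0 (such a exists since d ≥ 2). Then the field v(x) := cos( 2π ∑_{i=1}^{d} k*_i x_i / L_i ) • a is smooth, L-periodic, has mean zero over ∏_i [0, L_i), is divergence-free, is not identically zero, and satisfies fderiv ℝ v x F = 0 for all x ∈ ℝ^d. Hence the kernel of the transport operator (F·∇) on mean-zero divergence-free periodic fields is nontrivial when the incommensurability condition fails. -/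
open MeasureTheory Real
open scoped BigOperators

/-- When the incommensurability condition fails (there is `k* ∈ ℤ^d \ {0}` with
`F·g(k*) = 0`), the explicit field `v(x) = cos(2π ∑ i k*_i x_i / L_i) • a`, with
`a ≠ 0` orthogonal to the dual lattice vector `g(k*)`, is a smooth, `L`-periodic,
mean-zero, divergence-free, nontrivial element of the kernel of `(F·∇)`. -/
theorem stmt_6 {d : ℕ} (hd : 2 ≤ d) (L : Fin d → ℝ) (hL : ∀ i, 0 < L i)
    (F : Fin d → ℝ) (kstar : Fin d → ℤ) (hk : kstar ≠ 0)
    (hres : ∑ i : Fin d, F i * (kstar i : ℝ) / L i = 0)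
    (a : Fin d → ℝ) (ha : a ≠ 0)
    (haperp : ∑ i : Fin d, a i * (kstar i : ℝ) / L i = 0)
    (v : (Fin d → ℝ) → (Fin d → ℝ))
    (hv : ∀ x : Fin d → ℝ,
      v x = Real.cos (2 * Real.pi * ∑ i : Fin d, (kstar i : ℝ) * x i / L i) • a) :
    ContDiff ℝ (⊤ : ℕ∞) v ∧
    (∀ (i : Fin d) (x : Fin d → ℝ), v (x + L i • (Pi.single i 1 : Fin d → ℝ)) = v x) ∧
    (∫ x in Set.univ.pi fun i => Set.Ico (0 : ℝ) (L i), v x) = 0 ∧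
    (∀ x : Fin d → ℝ, ∑ i : Fin d, fderiv ℝ v x (Pi.single i 1) i = 0) ∧
    v ≠ 0 ∧
    (∀ x : Fin d → ℝ, fderiv ℝ v x F = 0) := by
  classical
  -- the linear phase
  set ℓ : (Fin d → ℝ) →L[ℝ] ℝ :=
    ∑ i : Fin d, (2 * Real.pi * (kstar i : ℝ) / L i) • ContinuousLinearMap.proj i with hℓdef
  have hℓ : ∀ x : Fin d → ℝ, ℓ x = ∑ i : Fin d, 2 * Real.pi * (kstar i : ℝ) / L i * x i := by
    intro x
    simp [hℓdef, ContinuousLinearMap.sum_apply]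
  have hphase : ∀ x : Fin d → ℝ,
      2 * Real.pi * ∑ i : Fin d, (kstar i : ℝ) * x i / L i = ℓ x := by
    intro x
    rw [hℓ, Finset.mul_sum]
    exact Finset.sum_congr rfl fun i _ => by ring
  have hv' : ∀ x, v x = Real.cos (ℓ x) • a := fun x => by rw [hv, hphase]
  have hvfun : v = fun x => Real.cos (ℓ x) • a := funext hv'
  -- derivative
  have hder : ∀ x : Fin d → ℝ,
      HasFDerivAt v (((-Real.sin (ℓ x)) • (ℓ : (Fin d → ℝ) →L[ℝ] ℝ)).smulRight a) x := by
    intro x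
    rw [hvfun]
    exact ((Real.hasDerivAt_cos (ℓ x)).comp_hasFDerivAt x ℓ.hasFDerivAt).smul_const a
  have hfder : ∀ (x : Fin d → ℝ) (w : Fin d → ℝ),
      fderiv ℝ v x w = (-Real.sin (ℓ x) * ℓ w) • a := by
    intro x w
    rw [(hder x).fderiv]
    simp [ContinuousLinearMap.smulRight_apply]
  have hℓsingle : ∀ i : Fin d, ℓ (Pi.single i 1) = 2 * Real.pi * (kstar i : ℝ) / L i := by
    intro i
    rw [hℓ]
    rw [Finset.sum_eq_single i]
    · simp
    · intro j _ hj; simp [Pi.single_apply, hj]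
    · simp
  refine ⟨?_, ?_, ?_, ?_, ?_, ?_⟩
  · -- smoothness
    rw [hvfun]
    exact ((Real.contDiff_cos.comp ℓ.contDiff).smul contDiff_const)
  · -- periodicity
    intro i x
    rw [hv' _, hv' x]
    congr 1
    rw [ℓ.map_add, ℓ.map_smul, hℓsingle i]
    have : L i • (2 * Real.pi * (kstar i : ℝ) / L i) = (kstar i : ℝ) * (2 * Real.pi) := by
      field_simp [(hL i).ne']
      linear_combination (π * (kstar i : ℝ) * 2) * mul_inv_cancel₀ (hL i).ne'
    rw [this]
    exact Real.cos_add_int_mul_two_pi (ℓ x) (kstar i)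
  · -- mean zero
    obtain ⟨j, hj⟩ : ∃ j, kstar j ≠ 0 := Function.ne_iff.mp hk
    have hbox : MeasurableSet (Set.univ.pi fun i => Set.Ico (0 : ℝ) (L i)) :=
      MeasurableSet.univ_pi fun i => measurableSet_Ico
    simp_rw [hvfun]
    rw [integral_smul_const]
    convert zero_smul ℝ a
    -- complexify
    set f : Fin d → ℝ → ℂ := fun i t =>
      (Set.Ico (0 : ℝ) (L i)).indicator
        (fun t => Complex.exp ((2 * Real.pi * (kstar i : ℝ) / L i * t : ℝ) * Complex.I)) t
      with hfdef
    have hInt : IntegrableOn (fun x : Fin d → ℝ => Complex.exp ((ℓ x : ℝ) * Complex.I))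
        (Set.univ.pi fun i => Set.Ico (0 : ℝ) (L i)) := by
      have hcont : Continuous fun x : Fin d → ℝ => Complex.exp ((ℓ x : ℝ) * Complex.I) := by
        exact Complex.continuous_exp.comp ((Complex.continuous_ofReal.comp ℓ.continuous).mul
          continuous_const)
      have hK : IsCompact (Set.univ.pi fun i => Set.Icc (0 : ℝ) (L i)) :=
        isCompact_univ_pi fun i => isCompact_Icc
      exact (hcont.continuousOn.integrableOn_compact hK).mono_set
        (Set.pi_mono fun i _ => Set.Ico_subset_Icc_self)
    have hprod : ∀ x : Fin d → ℝ,
        (∏ i : Fin d, f i (x i)) =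
          (Set.univ.pi fun i => Set.Ico (0 : ℝ) (L i)).indicator
            (fun x => Complex.exp ((ℓ x : ℝ) * Complex.I)) x := by
      intro x
      by_cases hx : x ∈ Set.univ.pi fun i => Set.Ico (0 : ℝ) (L i)
      · rw [Set.indicator_of_mem hx]
        have : ∀ i : Fin d, f i (x i) =
            Complex.exp ((2 * Real.pi * (kstar i : ℝ) / L i * x i : ℝ) * Complex.I) := by
          intro i
          exact Set.indicator_of_mem (hx i (Set.mem_univ i)) _
        simp_rw [this]
        rw [← Complex.exp_sum]
        congr 1
        rw [hℓ]
        push_cast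
        rw [Finset.sum_mul]
      · rw [Set.indicator_of_notMem hx]
        rw [Set.mem_pi] at hx
        push_neg at hx
        obtain ⟨i, _, hi⟩ := hx
        refine Finset.prod_eq_zero (Finset.mem_univ i) ?_
        rw [hfdef]
        simp only
        rw [Set.indicator_of_notMem hi]
    have hfj : (∫ t : ℝ, f j t) = 0 := by
      rw [hfdef]
      simp only
      rw [MeasureTheory.integral_indicator measurableSet_Ico]
      have h1 : (∫ t in Set.Ico (0 : ℝ) (L j),
          Complex.exp ((2 * Real.pi * (kstar j : ℝ) / L j * t : ℝ) * Complex.I)) =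
          ∫ t in (0 : ℝ)..(L j),
            Complex.exp (((2 * Real.pi * (kstar j : ℝ) / L j : ℝ) * Complex.I) * t) := by
        rw [MeasureTheory.integral_Ico_eq_integral_Ioo,
          intervalIntegral.integral_of_le (hL j).le,
          MeasureTheory.integral_Ioc_eq_integral_Ioo]
        congr 1
        funext t
        congr 1
        push_cast
        ring
      rw [h1]
      have hc : ((2 * Real.pi * (kstar j : ℝ) / L j : ℝ) : ℂ) * Complex.I ≠ 0 := by
        apply mul_ne_zero _ Complex.I_ne_zero
        simp only [ne_eq, Complex.ofReal_eq_zero]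
        apply div_ne_zero _ (hL j).ne'
        exact mul_ne_zero (by positivity) (Int.cast_ne_zero.mpr hj)
      rw [integral_exp_mul_complex hc]
      have h2 : ((2 * Real.pi * (kstar j : ℝ) / L j : ℝ) : ℂ) * Complex.I * (L j : ℝ) =
          (kstar j : ℤ) * (2 * Real.pi * Complex.I) := by
        have : (L j : ℂ) ≠ 0 := by exact_mod_cast (hL j).ne'
        field_simp
        push_cast
        linear_combination ((π : ℂ) * (kstar j : ℂ) * 2) * inv_mul_cancel₀ this
      rw [h2, Complex.exp_int_mul_two_pi_mul_I]
      simp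
    have key : (∫ x : Fin d → ℝ, ∏ i : Fin d, f i (x i)) = 0 := by
      rw [MeasureTheory.integral_fintype_prod_volume_eq_prod]
      exact Finset.prod_eq_zero (Finset.mem_univ j) hfj
    have key2 : (∫ x in Set.univ.pi fun i => Set.Ico (0 : ℝ) (L i),
        Complex.exp ((ℓ x : ℝ) * Complex.I)) = 0 := by
      rw [← MeasureTheory.integral_indicator hbox]
      simp_rw [← hprod]
      exact key
    have hre := _root_.integral_re hInt
    simp only [RCLike.re_to_complex] at hre
    have : (∫ x in Set.univ.pi fun i => Set.Ico (0 : ℝ) (L i), Real.cos (ℓ x)) =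
        (∫ x in Set.univ.pi fun i => Set.Ico (0 : ℝ) (L i),
          Complex.exp ((ℓ x : ℝ) * Complex.I)).re := by
      rw [← hre]
      congr 1
      funext x
      simp [Complex.exp_ofReal_mul_I_re]
    rw [this, key2]
    simp
  · -- divergence free
    intro x
    simp_rw [hfder]
    have : ∑ i : Fin d, ((-Real.sin (ℓ x) * ℓ (Pi.single i 1)) • a) i =
        -Real.sin (ℓ x) * (2 * Real.pi) * ∑ i : Fin d, a i * (kstar i : ℝ) / L i := by
      rw [Finset.mul_sum]
      refine Finset.sum_congr rfl fun i _ => ?_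
      rw [hℓsingle i]
      simp [Pi.smul_apply, smul_eq_mul]
      ring
    rw [this, haperp, mul_zero]
  · -- nontrivial
    intro h0
    apply ha
    have := congrFun h0 0
    rw [hv' 0] at this
    simpa using this
  · -- kernel of transport
    intro x
    rw [hfder]
    have hF : ℓ F = 0 := by
      rw [hℓ]
      have : ∑ i : Fin d, 2 * Real.pi * (kstar i : ℝ) / L i * F i =
          2 * Real.pi * ∑ i : Fin d, F i * (kstar i : ℝ) / L i := by
        rw [Finset.mul_sum]; exact Finset.sum_congr rfl fun i _ => by ring
      rw [this, hres, mul_zero]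
    rw [hF, mul_zero, zero_smul]
end

section
/- Let d ≥ 1, L_1, …, L_d > 0, F ∈ ℝ^d, C > 0 and τ ≥ 0, and assume the Diophantine condition |∑_{i=1}^{d} F_i k_i / L_i| ≥ C / ‖k‖^τ for all k ∈ ℤ^d \ {0}, where ‖k‖ is the Euclidean norm. Let ĥ : ℤ^d → ℂ^d be any function with ∑_{k ≠ 0} ‖k‖^{2τ} ‖ĥ(k)‖² < ∞, and define v̂(k) := −ĥ(k) / (2πi (F·g(k))) for k ≠ 0. Then ∑_{k ≠ 0} ‖v̂(k)‖² ≤ (1/(4π² C²)) ∑_{k ≠ 0} ‖k‖^{2τ} ‖ĥ(k)‖². In particular the Fourier coefficients of the reconstructed velocity are square-summable, i.e. the velocity belongs to L². -/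
open scoped BigOperators ENNReal

/-- Under a Diophantine condition `|F·g(k)| ≥ C/‖k‖^τ`, the solution of the mode
equations `v̂(k) = −ĥ(k)/(2πi F·g(k))` satisfies the `L²` bound
`∑ ‖v̂(k)‖² ≤ (4π²C²)⁻¹ ∑ ‖k‖^{2τ} ‖ĥ(k)‖²`: the reconstructed velocity is in `L²`. -/
theorem stmt_7 {d : ℕ} (hd : 1 ≤ d) (L : Fin d → ℝ) (hL : ∀ i, 0 < L i)
    (F : Fin d → ℝ) (C : ℝ) (hC : 0 < C) (τ : ℝ) (hτ : 0 ≤ τ)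
    (hdio : ∀ k : Fin d → ℤ, k ≠ 0 →
      C / (Real.sqrt (∑ i : Fin d, ((k i : ℝ)) ^ 2)) ^ τ ≤
        |∑ i : Fin d, F i * (k i : ℝ) / L i|)
    (hhat : (Fin d → ℤ) → EuclideanSpace ℂ (Fin d))
    (hfin : ∑' k : {k : Fin d → ℤ // k ≠ 0},
        ENNReal.ofReal
          ((Real.sqrt (∑ i : Fin d, ((k.val i : ℝ)) ^ 2)) ^ (2 * τ) *
            ‖hhat k.val‖ ^ 2) < ⊤)
    (vhat : (Fin d → ℤ) → EuclideanSpace ℂ (Fin d))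
    (hv : ∀ k : Fin d → ℤ, k ≠ 0 →
      vhat k = (-(1 / (2 * (Real.pi : ℂ) * Complex.I *
          ((∑ i : Fin d, F i * (k i : ℝ) / L i : ℝ) : ℂ)))) • hhat k) :
    ∑' k : {k : Fin d → ℤ // k ≠ 0}, ENNReal.ofReal (‖vhat k.val‖ ^ 2) ≤
      ENNReal.ofReal (1 / (4 * Real.pi ^ 2 * C ^ 2)) *
        ∑' k : {k : Fin d → ℤ // k ≠ 0},
          ENNReal.ofReal
            ((Real.sqrt (∑ i : Fin d, ((k.val i : ℝ)) ^ 2)) ^ (2 * τ) *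
              ‖hhat k.val‖ ^ 2) := by
  have hπ : (0:ℝ) < Real.pi := Real.pi_pos
  have key : ∀ k : {k : Fin d → ℤ // k ≠ 0},
      ENNReal.ofReal (‖vhat k.val‖ ^ 2) ≤
      ENNReal.ofReal ((1 / (4 * Real.pi ^ 2 * C ^ 2)) *
        ((Real.sqrt (∑ i : Fin d, ((k.val i : ℝ)) ^ 2)) ^ (2 * τ) *
          ‖hhat k.val‖ ^ 2)) := by
    rintro ⟨k, hk⟩
    apply ENNReal.ofReal_le_ofReal
    set r := Real.sqrt (∑ i : Fin d, ((k i : ℝ)) ^ 2) with hrdef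
    set α := ∑ i : Fin d, F i * (k i : ℝ) / L i with hαdef
    have hr : 0 < r := by
      apply Real.sqrt_pos.2
      obtain ⟨i, hi⟩ : ∃ i, k i ≠ 0 := by
        by_contra h; push_neg at h; exact hk (funext h)
      have hki : (0:ℝ) < (k i : ℝ) ^ 2 := by
        have : ((k i : ℝ)) ≠ 0 := Int.cast_ne_zero.2 hi
        positivity
      exact lt_of_lt_of_le hki (Finset.single_le_sum
        (fun j _ => sq_nonneg ((k j : ℝ))) (Finset.mem_univ i))
    have hrt : 0 < r ^ τ := Real.rpow_pos_of_pos hr τ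
    have hα : C / r ^ τ ≤ |α| := hdio k hk
    have hα0 : 0 < |α| := lt_of_lt_of_le (div_pos hC hrt) hα
    have hCle : C ≤ |α| * r ^ τ := (div_le_iff₀ hrt).1 hα
    have hnorm : ‖vhat k‖ = (1 / (2 * Real.pi * |α|)) * ‖hhat k‖ := by
      rw [hv k hk, norm_smul]
      congr 1
      rw [norm_neg, norm_div, norm_one, norm_mul, norm_mul, norm_mul,
        Complex.norm_I, Complex.norm_real, Complex.norm_real, Real.norm_eq_abs,
        Real.norm_eq_abs, abs_of_pos hπ, mul_one]
      norm_num
      rfl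
    have h2τ : r ^ (2 * τ) = (r ^ τ) ^ 2 := by
      rw [show (2:ℝ) * τ = τ * 2 by ring, Real.rpow_mul hr.le]
      norm_num [Real.rpow_two]
    rw [hnorm, h2τ]
    have h1 : 1 / (2 * Real.pi * |α|) ≤ r ^ τ / (2 * Real.pi * C) := by
      rw [div_le_div_iff₀ (by positivity) (by positivity)]
      nlinarith
    calc (1 / (2 * Real.pi * |α|) * ‖hhat k‖) ^ 2
        = (1 / (2 * Real.pi * |α|)) ^ 2 * ‖hhat k‖ ^ 2 := by ring
      _ ≤ (r ^ τ / (2 * Real.pi * C)) ^ 2 * ‖hhat k‖ ^ 2 :=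
          mul_le_mul_of_nonneg_right (pow_le_pow_left₀ (by positivity) h1 2)
            (sq_nonneg _)
      _ = 1 / (4 * Real.pi ^ 2 * C ^ 2) * ((r ^ τ) ^ 2 * ‖hhat k‖ ^ 2) := by
          rw [div_pow, show (2 * Real.pi * C) ^ 2 = 4 * Real.pi ^ 2 * C ^ 2 by ring]
          ring
  calc ∑' k : {k : Fin d → ℤ // k ≠ 0}, ENNReal.ofReal (‖vhat k.val‖ ^ 2)
      ≤ ∑' k : {k : Fin d → ℤ // k ≠ 0},
          ENNReal.ofReal ((1 / (4 * Real.pi ^ 2 * C ^ 2)) *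
            ((Real.sqrt (∑ i : Fin d, ((k.val i : ℝ)) ^ 2)) ^ (2 * τ) *
              ‖hhat k.val‖ ^ 2)) := ENNReal.tsum_le_tsum key
    _ = ∑' k : {k : Fin d → ℤ // k ≠ 0},
          ENNReal.ofReal (1 / (4 * Real.pi ^ 2 * C ^ 2)) *
            ENNReal.ofReal
              ((Real.sqrt (∑ i : Fin d, ((k.val i : ℝ)) ^ 2)) ^ (2 * τ) *
                ‖hhat k.val‖ ^ 2) := by
        refine tsum_congr fun k => ?_
        rw [ENNReal.ofReal_mul (by positivity)]
    _ = _ := ENNReal.tsum_mul_left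
end
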